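/- arXiv:1703.05962 — 2 statements merged into one kernel-verified Lean document; each statement's English description precedes it below -/
import Mathlib

section
/- Let A = k⟨X,Y⟩/(X^a, XY−qYX, Y^a) where q ∈ k is a primitive a-th root of unity, a ≥ 2. Then the center of A is 2-dimensional, spanned by 1 and x^{a-1}y^{a-1}. -/
open scoped TensorProduct
open Finset MulOpposite

noncomputable section

inductive QciRel (k : Type) [Field k] (a : ℕ) (q : k) :
    FreeAlgebra k (Fin 2) → FreeAlgebra k (Fin 2) → Prop
  | xa : QciRel k a q ((FreeAlgebra.ι k (0 : Fin 2)) ^ a) 0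
  | ya : QciRel k a q ((FreeAlgebra.ι k (1 : Fin 2)) ^ a) 0
  | comm : QciRel k a q (FreeAlgebra.ι k (0 : Fin 2) * FreeAlgebra.ι k (1 : Fin 2))
      (algebraMap k (FreeAlgebra k (Fin 2)) q *
        (FreeAlgebra.ι k (1 : Fin 2) * FreeAlgebra.ι k (0 : Fin 2)))

/-- The quantum complete intersection `k⟨X,Y⟩/(X^a, XY - qYX, Y^a)`. -/
abbrev Qci (k : Type) [Field k] (a : ℕ) (q : k) := RingQuot (QciRel k a q)

/-- The image of `X` in the quantum complete intersection. -/
def qx (k : Type) [Field k] (a : ℕ) (q : k) : Qci k a q :=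
  RingQuot.mkAlgHom k (QciRel k a q) (FreeAlgebra.ι k (0 : Fin 2))

/-- The image of `Y` in the quantum complete intersection. -/
def qy (k : Type) [Field k] (a : ℕ) (q : k) : Qci k a q :=
  RingQuot.mkAlgHom k (QciRel k a q) (FreeAlgebra.ι k (1 : Fin 2))

/-! The monomials `y^u x^v` with `u, v < a` span `A`. They are linearly independent because `A`
acts on `k^{a × a}` by the weighted shifts `x • e(u,v) = q^u e(u,v+1)` and
`y • e(u,v) = e(u+1,v)`, and `y^u x^v • e(0,0) = e(u,v)`. In these coordinates right
multiplication by `x` and `y` are weighted shifts too, so the coordinates `f` of a central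
element satisfy `q^u f(u,v) = f(u,v)` for `v < a - 1` and `q^v f(u,v) = f(u,v)` for `u < a - 1`.
Since `q` is a primitive `a`-th root of unity, only `f(0,0)` and `f(a-1,a-1)` survive, and
`y^(a-1) x^(a-1)` is a nonzero multiple of `x^(a-1) y^(a-1)`. -/

theorem pow_mul_pow_eq_smul_of_mul_eq_smul {R A : Type*} [CommSemiring R] [Semiring A]
    [Algebra R A] {x y : A} {c : R} (h : x * y = c • (y * x)) (m n : ℕ) :
    x ^ m * y ^ n = c ^ (m * n) • (y ^ n * x ^ m) := by
  have hx : ∀ n : ℕ, x * y ^ n = c ^ n • (y ^ n * x) := by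
    intro n
    induction n with
    | zero => simp
    | succ n ih =>
      rw [pow_succ, ← mul_assoc, ih, smul_mul_assoc, mul_assoc, h, mul_smul_comm, smul_smul,
        ← mul_assoc, ← pow_succ, ← pow_succ]
  induction m with
  | zero => simp
  | succ m ih =>
    rw [pow_succ', mul_assoc, ih, mul_smul_comm, ← mul_assoc, hx, smul_mul_assoc, smul_smul,
      mul_assoc, ← pow_succ', ← pow_add, Nat.succ_mul, add_comm (m * n)]

namespace Qci

section Model

variable (R : Type*) [CommSemiring R] (a : ℕ)

def single (u v : ℕ) : Fin a × Fin a → R :=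
  fun p => if (p.1 : ℕ) = u ∧ (p.2 : ℕ) = v then 1 else 0

def shiftX (w : ℕ → R) : (Fin a × Fin a → R) →ₗ[R] (Fin a × Fin a → R) where
  toFun f p := if h : 0 < (p.2 : ℕ) then
      w p.1 * f (p.1, ⟨(p.2 : ℕ) - 1, lt_of_le_of_lt (Nat.sub_le _ _) p.2.isLt⟩)
    else 0
  map_add' f g := by
    funext p
    by_cases h : 0 < (p.2 : ℕ) <;> simp [h, mul_add]
  map_smul' c f := by
    funext p
    by_cases h : 0 < (p.2 : ℕ) <;> simp [h, mul_left_comm]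

def shiftY (w : ℕ → R) : (Fin a × Fin a → R) →ₗ[R] (Fin a × Fin a → R) where
  toFun f p := if h : 0 < (p.1 : ℕ) then
      w p.2 * f (⟨(p.1 : ℕ) - 1, lt_of_le_of_lt (Nat.sub_le _ _) p.1.isLt⟩, p.2)
    else 0
  map_add' f g := by
    funext p
    by_cases h : 0 < (p.1 : ℕ) <;> simp [h, mul_add]
  map_smul' c f := by
    funext p
    by_cases h : 0 < (p.1 : ℕ) <;> simp [h, mul_left_comm]

variable {R a}

theorem single_eq_zero {u v : ℕ} (h : a ≤ u ∨ a ≤ v) : single R a u v = 0 := by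
  funext p
  have := p.1.isLt
  have := p.2.isLt
  simp only [single, Pi.zero_apply, ite_eq_right_iff]
  omega

theorem single_coe (p : Fin a × Fin a) : single R a p.1 p.2 = Pi.single p 1 := by
  funext p'
  simp [single, Pi.single_apply, Prod.ext_iff, Fin.ext_iff]

theorem shiftX_apply_succ (w : ℕ → R) (f : Fin a × Fin a → R) (u v : Fin a)
    (h : (v : ℕ) + 1 < a) : shiftX R a w f (u, ⟨v + 1, h⟩) = w u * f (u, v) := by
  simp [shiftX]

theorem shiftY_apply_succ (w : ℕ → R) (f : Fin a × Fin a → R) (u v : Fin a)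
    (h : (u : ℕ) + 1 < a) : shiftY R a w f (⟨u + 1, h⟩, v) = w v * f (u, v) := by
  simp [shiftY]

theorem shiftX_single (w : ℕ → R) (u v : ℕ) :
    shiftX R a w (single R a u v) = w u • single R a u (v + 1) := by
  funext p
  simp only [shiftX, single, LinearMap.coe_mk, AddHom.coe_mk, Pi.smul_apply, smul_eq_mul]
  split_ifs <;> first | omega | simp_all

theorem shiftY_single (w : ℕ → R) (u v : ℕ) :
    shiftY R a w (single R a u v) = w v • single R a (u + 1) v := by
  funext p
  simp only [shiftY, single, LinearMap.coe_mk, AddHom.coe_mk, Pi.smul_apply, smul_eq_mul]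
  split_ifs <;> first | omega | simp_all

theorem shiftX_pow_single (w : ℕ → R) (n u v : ℕ) :
    (shiftX R a w ^ n) (single R a u v) = w u ^ n • single R a u (v + n) := by
  induction n with
  | zero => simp
  | succ n ih =>
    rw [pow_succ', Module.End.mul_apply, ih, map_smul, shiftX_single, smul_smul, ← pow_succ,
      ← add_assoc]

theorem shiftY_pow_single (w : ℕ → R) (n u v : ℕ) :
    (shiftY R a w ^ n) (single R a u v) = w v ^ n • single R a (u + n) v := by
  induction n with
  | zero => simp
  | succ n ih =>
    rw [pow_succ', Module.End.mul_apply, ih, map_smul, shiftY_single, smul_smul, ← pow_succ,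
      ← add_assoc]

theorem shiftX_pow_self (w : ℕ → R) : shiftX R a w ^ a = 0 :=
  (Pi.basisFun R _).ext fun p => by
    rw [Pi.basisFun_apply, ← single_coe, shiftX_pow_single, single_eq_zero (by omega),
      smul_zero, LinearMap.zero_apply]

theorem shiftY_pow_self (w : ℕ → R) : shiftY R a w ^ a = 0 :=
  (Pi.basisFun R _).ext fun p => by
    rw [Pi.basisFun_apply, ← single_coe, shiftY_pow_single, single_eq_zero (by omega),
      smul_zero, LinearMap.zero_apply]

theorem shiftX_mul_shiftY (q : R) : shiftX R a (q ^ ·) * shiftY R a 1 =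
    algebraMap R _ q * (shiftY R a 1 * shiftX R a (q ^ ·)) :=
  (Pi.basisFun R _).ext fun p => by
    simp only [Pi.basisFun_apply, ← single_coe, Module.End.mul_apply, shiftX_single,
      shiftY_single, map_smul, Module.algebraMap_end_apply, smul_smul, Pi.one_apply, pow_succ']
    ring_nf

end Model

variable {k : Type} [Field k] {a : ℕ} {q : k}

theorem qx_pow_eq_zero {n : ℕ} (h : a ≤ n) : qx k a q ^ n = 0 := by
  obtain ⟨m, rfl⟩ := Nat.exists_eq_add_of_le h
  rw [pow_add, qx, ← map_pow, RingQuot.mkAlgHom_rel k QciRel.xa, map_zero, zero_mul]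

theorem qy_pow_eq_zero {n : ℕ} (h : a ≤ n) : qy k a q ^ n = 0 := by
  obtain ⟨m, rfl⟩ := Nat.exists_eq_add_of_le h
  rw [pow_add, qy, ← map_pow, RingQuot.mkAlgHom_rel k QciRel.ya, map_zero, zero_mul]

theorem qx_mul_qy : qx k a q * qy k a q = q • (qy k a q * qx k a q) := by
  rw [qx, qy, ← map_mul, RingQuot.mkAlgHom_rel k QciRel.comm, map_mul, map_mul,
    AlgHom.commutes, ← Algebra.smul_def]

theorem qx_pow_mul_qy_pow (m n : ℕ) :
    qx k a q ^ m * qy k a q ^ n = q ^ (m * n) • (qy k a q ^ n * qx k a q ^ m) :=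
  pow_mul_pow_eq_smul_of_mul_eq_smul qx_mul_qy m n

theorem adjoin_qx_qy : Algebra.adjoin k {qx k a q, qy k a q} = ⊤ := by
  have h : ({qx k a q, qy k a q} : Set (Qci k a q)) =
      RingQuot.mkAlgHom k (QciRel k a q) '' Set.range (FreeAlgebra.ι k) := by
    rw [← Set.range_comp, ← Matrix.range_cons_cons_empty (qx k a q) (qy k a q) ![]]
    congr 1
    ext i
    fin_cases i <;> rfl
  rw [h, Algebra.adjoin_image, FreeAlgebra.adjoin_range_ι, Algebra.map_top,
    AlgHom.range_eq_top]
  exact RingQuot.mkAlgHom_surjective k (QciRel k a q)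

theorem mem_center_iff_commute {z : Qci k a q} :
    z ∈ Subalgebra.center k (Qci k a q) ↔ Commute (qx k a q) z ∧ Commute (qy k a q) z := by
  refine ⟨fun hz => ⟨Subalgebra.mem_center_iff.1 hz _, Subalgebra.mem_center_iff.1 hz _⟩,
    fun ⟨hx, hy⟩ => Subalgebra.mem_center_iff.2 fun g => ?_⟩
  have hg : g ∈ Algebra.adjoin k {qx k a q, qy k a q} := by
    rw [adjoin_qx_qy]; exact Algebra.mem_top
  refine (Algebra.commute_of_mem_adjoin_of_forall_mem_commute hg ?_).eq.symm
  rintro _ (rfl | rfl)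
  exacts [hx.symm, hy.symm]

variable (k a q) in
def monomial (p : Fin a × Fin a) : Qci k a q := qy k a q ^ (p.1 : ℕ) * qx k a q ^ (p.2 : ℕ)

theorem qy_pow_mul_qx_pow_mem_span (u v : ℕ) :
    qy k a q ^ u * qx k a q ^ v ∈ Submodule.span k (Set.range (monomial k a q)) := by
  by_cases h : u < a ∧ v < a
  · exact Submodule.subset_span ⟨(⟨u, h.1⟩, ⟨v, h.2⟩), rfl⟩
  · rcases not_and_or.1 h with hu | hv
    · rw [qy_pow_eq_zero (not_lt.1 hu), zero_mul]
      exact zero_mem _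
    · rw [qx_pow_eq_zero (not_lt.1 hv), mul_zero]
      exact zero_mem _

theorem mul_mem_span_monomial {z w : Qci k a q}
    (hz : z ∈ Submodule.span k (Set.range (monomial k a q)))
    (hw : w ∈ Submodule.span k (Set.range (monomial k a q))) :
    z * w ∈ Submodule.span k (Set.range (monomial k a q)) := by
  have hzw := Submodule.mul_mem_mul hz hw
  rw [Submodule.span_mul_span] at hzw
  refine Submodule.span_le.2 ?_ hzw
  rintro _ ⟨_, ⟨p, rfl⟩, _, ⟨p', rfl⟩, rfl⟩
  have hpp' : monomial k a q p * monomial k a q p' = q ^ ((p.2 : ℕ) * p'.1) •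
      (qy k a q ^ ((p.1 : ℕ) + p'.1) * qx k a q ^ ((p.2 : ℕ) + p'.2)) := by
    rw [monomial, monomial, mul_assoc, ← mul_assoc (qx k a q ^ _), qx_pow_mul_qy_pow,
      smul_mul_assoc, mul_smul_comm, pow_add, pow_add]
    simp only [mul_assoc]
  dsimp only
  rw [hpp']
  exact Submodule.smul_mem _ _ (qy_pow_mul_qx_pow_mem_span _ _)

theorem span_monomial_eq_top : Submodule.span k (Set.range (monomial k a q)) = ⊤ := by
  rw [eq_top_iff]
  rintro z -
  have hz : z ∈ Algebra.adjoin k {qx k a q, qy k a q} := by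
    rw [adjoin_qx_qy]; exact Algebra.mem_top
  induction hz using Algebra.adjoin_induction with
  | mem x hx =>
    rcases hx with rfl | rfl
    · simpa using qy_pow_mul_qx_pow_mem_span (k := k) (q := q) 0 1
    · simpa using qy_pow_mul_qx_pow_mem_span (k := k) (q := q) 1 0
  | algebraMap r =>
    rw [Algebra.algebraMap_eq_smul_one]
    refine Submodule.smul_mem _ _ ?_
    simpa using qy_pow_mul_qx_pow_mem_span (k := k) (q := q) 0 0
  | add x y _ _ hx hy => exact add_mem hx hy
  | mul x y _ _ hx hy => exact mul_mem_span_monomial hx hy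

variable (k a q) in
def rep : Qci k a q →ₐ[k] Module.End k (Fin a × Fin a → k) :=
  RingQuot.liftAlgHom k ⟨FreeAlgebra.lift k ![shiftX k a (q ^ ·), shiftY k a 1], by
    rintro _ _ (_ | _ | _)
    · simp only [map_pow, map_zero, FreeAlgebra.lift_ι_apply, Matrix.cons_val_zero]
      exact shiftX_pow_self _
    · simp only [map_pow, map_zero, FreeAlgebra.lift_ι_apply, Matrix.cons_val_one]
      exact shiftY_pow_self _
    · simp only [map_mul, FreeAlgebra.lift_ι_apply, Matrix.cons_val_zero, Matrix.cons_val_one,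
        AlgHom.commutes]
      exact shiftX_mul_shiftY q⟩

theorem rep_qx : rep k a q (qx k a q) = shiftX k a (q ^ ·) := by
  simp [rep, qx]

theorem rep_qy : rep k a q (qy k a q) = shiftY k a 1 := by
  simp [rep, qy]

variable (k a q) in
def coord : Qci k a q →ₗ[k] (Fin a × Fin a → k) :=
  LinearMap.applyₗ (single k a 0 0) ∘ₗ (rep k a q).toLinearMap

theorem coord_apply (z : Qci k a q) : coord k a q z = rep k a q z (single k a 0 0) := rfl

theorem coord_qy_pow_mul_qx_pow (u v : ℕ) :
    coord k a q (qy k a q ^ u * qx k a q ^ v) = single k a u v := by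
  simp [coord_apply, rep_qx, rep_qy, shiftX_pow_single, shiftY_pow_single]

theorem coord_monomial (p : Fin a × Fin a) : coord k a q (monomial k a q p) = Pi.single p 1 :=
  (coord_qy_pow_mul_qx_pow _ _).trans (single_coe p)

theorem coord_injective : Function.Injective (coord k a q) := by
  have hsurj : Function.Surjective (Fintype.linearCombination k (monomial k a q)) := by
    rw [← LinearMap.range_eq_top, Fintype.range_linearCombination, span_monomial_eq_top]
  have hinv : ∀ c, coord k a q (Fintype.linearCombination k (monomial k a q) c) = c := by
    intro c
    simpa [Fintype.linearCombination_apply, coord_monomial] using (Pi.basisFun k _).sum_repr c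
  intro z w h
  obtain ⟨c, rfl⟩ := hsurj z
  obtain ⟨d, rfl⟩ := hsurj w
  rw [hinv, hinv] at h
  rw [h]

theorem coord_qx_mul (z : Qci k a q) :
    coord k a q (qx k a q * z) = shiftX k a (q ^ ·) (coord k a q z) := by
  rw [coord_apply, coord_apply, map_mul, rep_qx, Module.End.mul_apply]

theorem coord_qy_mul (z : Qci k a q) :
    coord k a q (qy k a q * z) = shiftY k a 1 (coord k a q z) := by
  rw [coord_apply, coord_apply, map_mul, rep_qy, Module.End.mul_apply]

theorem coord_mul_qx (z : Qci k a q) :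
    coord k a q (z * qx k a q) = shiftX k a 1 (coord k a q z) := by
  refine LinearMap.congr_fun (f := coord k a q ∘ₗ LinearMap.mulRight k (qx k a q))
    (g := shiftX k a 1 ∘ₗ coord k a q)
    (LinearMap.ext_on_range span_monomial_eq_top fun p => ?_) z
  simp [monomial, mul_assoc, ← pow_succ, coord_qy_pow_mul_qx_pow, shiftX_single]

theorem coord_mul_qy (z : Qci k a q) :
    coord k a q (z * qy k a q) = shiftY k a (q ^ ·) (coord k a q z) := by
  refine LinearMap.congr_fun (f := coord k a q ∘ₗ LinearMap.mulRight k (qy k a q))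
    (g := shiftY k a (q ^ ·) ∘ₗ coord k a q)
    (LinearMap.ext_on_range span_monomial_eq_top fun p => ?_) z
  have h := qx_pow_mul_qy_pow (k := k) (a := a) (q := q) p.2 1
  rw [pow_one, mul_one] at h
  simp only [LinearMap.comp_apply, LinearMap.mulRight_apply, monomial]
  rw [mul_assoc, h, mul_smul_comm, ← mul_assoc, ← pow_succ, map_smul, coord_qy_pow_mul_qx_pow,
    coord_qy_pow_mul_qx_pow, shiftY_single]

theorem coord_one : coord k a q 1 = single k a 0 0 := by
  simpa using coord_qy_pow_mul_qx_pow (k := k) (a := a) (q := q) 0 0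

theorem coord_qx_pow_mul_qy_pow (m n : ℕ) :
    coord k a q (qx k a q ^ m * qy k a q ^ n) = q ^ (m * n) • single k a n m := by
  rw [qx_pow_mul_qy_pow, map_smul, coord_qy_pow_mul_qx_pow]

theorem mem_center_iff_coord {z : Qci k a q} :
    z ∈ Subalgebra.center k (Qci k a q) ↔
      shiftX k a (q ^ ·) (coord k a q z) = shiftX k a 1 (coord k a q z) ∧
      shiftY k a 1 (coord k a q z) = shiftY k a (q ^ ·) (coord k a q z) := by
  rw [mem_center_iff_commute, Commute, Commute, SemiconjBy, SemiconjBy,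
    ← coord_injective.eq_iff (a := qx k a q * z), ← coord_injective.eq_iff (a := qy k a q * z),
    coord_qx_mul, coord_mul_qx, coord_qy_mul, coord_mul_qy]

theorem exists_eq_smul_single_add_smul_single (ha : 2 ≤ a) (hq : IsPrimitiveRoot q a)
    {f : Fin a × Fin a → k} (hX : shiftX k a (q ^ ·) f = shiftX k a 1 f)
    (hY : shiftY k a 1 f = shiftY k a (q ^ ·) f) :
    ∃ c d : k, f = c • single k a 0 0 + d • single k a (a - 1) (a - 1) := by
  have hXzero : ∀ u v : Fin a, (v : ℕ) + 1 < a → (u : ℕ) ≠ 0 → f (u, v) = 0 := by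
    intro u v hv hu
    have h := congrFun hX (u, ⟨v + 1, hv⟩)
    rw [shiftX_apply_succ, shiftX_apply_succ, Pi.one_apply, one_mul] at h
    exact (mul_left_eq_self₀.1 h).resolve_left (hq.pow_ne_one_of_pos_of_lt hu u.isLt)
  have hYzero : ∀ u v : Fin a, (u : ℕ) + 1 < a → (v : ℕ) ≠ 0 → f (u, v) = 0 := by
    intro u v hu hv
    have h := congrFun hY (⟨u + 1, hu⟩, v)
    rw [shiftY_apply_succ, shiftY_apply_succ, Pi.one_apply, one_mul] at h
    exact (mul_left_eq_self₀.1 h.symm).resolve_left (hq.pow_ne_one_of_pos_of_lt hv v.isLt)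
  refine ⟨f (⟨0, by omega⟩, ⟨0, by omega⟩), f (⟨a - 1, by omega⟩, ⟨a - 1, by omega⟩), ?_⟩
  funext ⟨u, v⟩
  simp only [Pi.add_apply, Pi.smul_apply, single, smul_eq_mul, mul_ite, mul_one, mul_zero]
  split_ifs with h0 hl hl
  · omega
  · rw [add_zero]; congr <;> ext <;> simp [h0.1, h0.2]
  · rw [zero_add]; congr <;> ext <;> simp [hl.1, hl.2]
  · rw [add_zero]
    have := u.isLt
    have := v.isLt
    by_cases hv : (v : ℕ) + 1 < a ∧ (u : ℕ) ≠ 0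
    · exact hXzero u v hv.1 hv.2
    · exact hYzero u v (by omega) (by omega)

theorem center_eq_span (ha : 2 ≤ a) (hq : IsPrimitiveRoot q a) :
    Subalgebra.toSubmodule (Subalgebra.center k (Qci k a q)) =
      Submodule.span k {1, qx k a q ^ (a - 1) * qy k a q ^ (a - 1)} := by
  apply le_antisymm
  · intro z hz
    obtain ⟨c, d, hcd⟩ := exists_eq_smul_single_add_smul_single ha hq
      (mem_center_iff_coord.1 hz).1 (mem_center_iff_coord.1 hz).2
    have hq' : q ^ ((a - 1) * (a - 1)) ≠ 0 := pow_ne_zero _ (hq.ne_zero (by omega))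
    have hz : z = c • 1 +
        (d / q ^ ((a - 1) * (a - 1))) • (qx k a q ^ (a - 1) * qy k a q ^ (a - 1)) :=
      coord_injective (by
        rw [hcd, map_add, map_smul, map_smul, coord_one, coord_qx_pow_mul_qy_pow, smul_smul,
          div_mul_cancel₀ _ hq'])
    rw [hz]
    exact add_mem (Submodule.smul_mem _ _ (Submodule.subset_span (by simp)))
      (Submodule.smul_mem _ _ (Submodule.subset_span (by simp)))
  · rw [Submodule.span_le]
    rintro _ (rfl | rfl)
    · exact one_mem (Subalgebra.center k _)
    · have hX : single k a (a - 1) (a - 1 + 1) = 0 := single_eq_zero (by omega)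
      have hY : single k a (a - 1 + 1) (a - 1) = 0 := single_eq_zero (by omega)
      rw [SetLike.mem_coe, Subalgebra.mem_toSubmodule, mem_center_iff_coord,
        coord_qx_pow_mul_qy_pow]
      simp only [map_smul, shiftX_single, shiftY_single, hX, hY, smul_zero, and_self]

theorem linearIndependent_one_qx_pow_mul_qy_pow (ha : 2 ≤ a) (hq : q ≠ 0) :
    LinearIndependent k ![1, qx k a q ^ (a - 1) * qy k a q ^ (a - 1)] := by
  rw [LinearIndependent.pair_iff]
  intro s t hst
  have h := congrArg (coord k a q) hst
  rw [map_add, map_smul, map_smul, coord_one, coord_qx_pow_mul_qy_pow, map_zero] at h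
  have h0 := congrFun h (⟨0, by omega⟩, ⟨0, by omega⟩)
  have hl := congrFun h (⟨a - 1, by omega⟩, ⟨a - 1, by omega⟩)
  have hne : (0 : ℕ) ≠ a - 1 := by omega
  exact ⟨by simpa [single, hne] using h0,
    by simpa [single, hne.symm, hq] using hl⟩

end Qci

open Qci in
/-- The center of `A = k⟨X,Y⟩/(X^a, XY−qYX, Y^a)`, `q` a primitive `a`-th root
of unity, is 2-dimensional, spanned by `1` and `x^{a-1}y^{a-1}`. -/
theorem stmt_6 (k : Type) [Field k] (a : ℕ) (ha : 2 ≤ a) (q : k)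
    (hq : IsPrimitiveRoot q a) :
    Subalgebra.toSubmodule (Subalgebra.center k (Qci k a q)) =
      Submodule.span k {1, qx k a q ^ (a - 1) * qy k a q ^ (a - 1)} ∧
    Module.finrank k (Subalgebra.center k (Qci k a q)) = 2 := by
  refine ⟨center_eq_span ha hq, ?_⟩
  rw [← Subalgebra.finrank_toSubmodule, center_eq_span ha hq,
    ← Matrix.range_cons_cons_empty _ _ ![],
    finrank_span_eq_card (linearIndependent_one_qx_pow_mul_qy_pow ha (hq.ne_zero (by omega))),
    Fintype.card_fin]
end
end

section
/- In the enveloping algebra A^e of A = k⟨X,Y⟩/(X^a, XY−qYX, Y^a) with q a primitive a-th root of unity, the identity β_x(−1)·γ_y(2) = γ_y(0)·β_x(0) holds, where β_x(s) = ∑_{i=0}^{a-2} c_i q^{si} (x^{a-2-i} ⊗ x^i), γ_y(s) = ∑_{j=0}^{a-1} q^{js}(y^j ⊗ y^{a-1-j}), and c_i = 1+q+...+q^i. -/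
open scoped TensorProduct
open Finset MulOpposite

noncomputable section

/-! Every term of either side is a scalar multiple of the same monomial
`y ^ j * x ^ (a - 2 - i) ⊗ op (y ^ (a - 1 - j) * x ^ i)`: moving `x`-powers past `y`-powers
costs powers of `q`. Comparing the scalars, the two exponents differ by `a * (j - i)`, which
`q ^ a = 1` kills. -/

section QCommuting

variable {R A : Type*} [CommSemiring R] [Semiring A] [Algebra R A] {q : R} {x y : A}

lemma mul_pow_eq_smul_pow_mul (hxy : x * y = q • (y * x)) (n : ℕ) :
    x * y ^ n = q ^ n • (y ^ n * x) := by
  induction n with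
  | zero => simp
  | succ n ih =>
    rw [pow_succ, ← mul_assoc, ih, smul_mul_assoc, mul_assoc, hxy, mul_smul_comm, smul_smul,
      ← pow_succ, ← mul_assoc, ← pow_succ]

lemma pow_mul_pow_eq_smul_pow_mul_pow (hxy : x * y = q • (y * x)) (m n : ℕ) :
    x ^ m * y ^ n = q ^ (m * n) • (y ^ n * x ^ m) := by
  induction m with
  | zero => simp
  | succ m ih =>
    rw [pow_succ', mul_assoc, ih, mul_smul_comm, ← mul_assoc, mul_pow_eq_smul_pow_mul hxy,
      smul_mul_assoc, smul_smul, mul_assoc, ← pow_succ', ← pow_add, add_mul, one_mul]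

/-- Both sides equal `q ^ (m * j + i * n) • (y ^ j * x ^ m ⊗ₜ op (y ^ n * x ^ i))`. -/
lemma smul_tmul_op_mul_tmul_op_comm (hxy : x * y = q • (y * x)) (m i j n : ℕ) :
    q ^ (i * n) • (((x ^ m : A) ⊗ₜ[R] (op (x ^ i) : Aᵐᵒᵖ)) *
        ((y ^ j : A) ⊗ₜ[R] (op (y ^ n) : Aᵐᵒᵖ))) =
      q ^ (m * j) • (((y ^ j : A) ⊗ₜ[R] (op (y ^ n) : Aᵐᵒᵖ)) *
        ((x ^ m : A) ⊗ₜ[R] (op (x ^ i) : Aᵐᵒᵖ))) := by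
  rw [Algebra.TensorProduct.tmul_mul_tmul, Algebra.TensorProduct.tmul_mul_tmul, ← op_mul,
    ← op_mul, pow_mul_pow_eq_smul_pow_mul_pow hxy, pow_mul_pow_eq_smul_pow_mul_pow hxy, op_smul,
    ← TensorProduct.smul_tmul', TensorProduct.tmul_smul, smul_smul, smul_smul, mul_comm]

end QCommuting

lemma zpow_neg_mul_zpow_mul_pow_eq_pow {K : Type*} [Field K] {q : K} {a : ℕ}
    (hq0 : q ≠ 0) (hqa : q ^ a = 1) {i j : ℕ} (hi : i + 2 ≤ a) (hj : j < a) :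
    q ^ (-(i : ℤ)) * q ^ (2 * (j : ℤ)) * q ^ ((a - 2 - i) * j) = q ^ (i * (a - 1 - j)) := by
  have hperiod : ∀ e : ℤ, q ^ (e + a * (j - i : ℤ)) = q ^ e := by
    intro e
    rw [zpow_add₀ hq0, zpow_mul, zpow_natCast, hqa, one_zpow, mul_one]
  rw [← zpow_natCast, ← zpow_natCast, ← zpow_add₀ hq0, ← zpow_add₀ hq0,
    ← hperiod ((i * (a - 1 - j) : ℕ) : ℤ)]
  congr 1
  push_cast [Nat.cast_sub (by omega : 2 + i ≤ a), Nat.cast_sub (by omega : 1 + j ≤ a), Nat.sub_sub]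
  ring

section QCommutingOverField

variable {K A : Type*} [Field K] [Semiring A] [Algebra K A] {q : K} {x y : A}

lemma zpow_smul_tmul_op_mul_tmul_op_eq (hxy : x * y = q • (y * x)) (hq0 : q ≠ 0) {a : ℕ}
    (hqa : q ^ a = 1) {i j : ℕ} (hi : i + 2 ≤ a) (hj : j < a) :
    (q ^ (-(i : ℤ)) * q ^ (2 * (j : ℤ))) •
        (((x ^ (a - 2 - i) : A) ⊗ₜ[K] (op (x ^ i) : Aᵐᵒᵖ)) *
          ((y ^ j : A) ⊗ₜ[K] (op (y ^ (a - 1 - j)) : Aᵐᵒᵖ))) =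
      ((y ^ j : A) ⊗ₜ[K] (op (y ^ (a - 1 - j)) : Aᵐᵒᵖ)) *
        ((x ^ (a - 2 - i) : A) ⊗ₜ[K] (op (x ^ i) : Aᵐᵒᵖ)) := by
  have hm : q ^ ((a - 2 - i) * j) ≠ 0 := pow_ne_zero _ hq0
  conv_rhs => rw [← inv_smul_smul₀ hm (_ * _), ← smul_tmul_op_mul_tmul_op_comm hxy, smul_smul,
    ← zpow_neg_mul_zpow_mul_pow_eq_pow hq0 hqa hi hj, mul_comm _⁻¹, mul_inv_cancel_right₀ hm]

end QCommutingOverField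

lemma qx_mul_qy (k : Type) [Field k] (a : ℕ) (q : k) :
    qx k a q * qy k a q = q • (qy k a q * qx k a q) := by
  simpa [qx, qy, Algebra.smul_def] using
    RingQuot.mkAlgHom_rel k (QciRel.comm (k := k) (a := a) (q := q))

theorem stmt_12_general (k : Type) [Field k] (a : ℕ) (ha : 3 ≤ a) (q : k)
    (hq : IsPrimitiveRoot q a)
    (c : ℕ → k) :
    let x := qx k a q
    let y := qy k a q
    let βx : ℤ → Qci k a q ⊗[k] (Qci k a q)ᵐᵒᵖ := fun s =>
      ∑ i ∈ range (a - 1), (c i * q ^ (s * (i : ℤ))) •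
        ((x ^ (a - 2 - i) : Qci k a q) ⊗ₜ[k] (op (x ^ i) : (Qci k a q)ᵐᵒᵖ))
    let γy : ℤ → Qci k a q ⊗[k] (Qci k a q)ᵐᵒᵖ := fun s =>
      ∑ j ∈ range a, q ^ (s * (j : ℤ)) •
        ((y ^ j : Qci k a q) ⊗ₜ[k] (op (y ^ (a - 1 - j)) : (Qci k a q)ᵐᵒᵖ))
    βx (-1) * γy 2 = γy 0 * βx 0 := by
  intro x y βx γy
  simp only [βx, γy, x, y, sum_mul_sum]
  conv_rhs => rw [sum_comm]
  refine sum_congr rfl fun i hi => sum_congr rfl fun j hj => ?_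
  rw [mem_range] at hi hj
  rw [smul_mul_smul_comm, neg_one_mul, mul_assoc, ← smul_smul,
    zpow_smul_tmul_op_mul_tmul_op_eq (qx_mul_qy k a q) (hq.ne_zero (by omega))
      hq.pow_eq_one (by omega) hj]
  simp only [zero_mul, zpow_zero, mul_one, one_smul, mul_smul_comm]

/-- In `A^e = A ⊗ A^op` for `A = k⟨X,Y⟩/(X^a, XY−qYX, Y^a)`:
`β_x(−1) · γ_y(2) = γ_y(0) · β_x(0)`. -/
theorem stmt_12 (k : Type) [Field k] (a : ℕ) (ha : 3 ≤ a) (q : k)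
    (hq : IsPrimitiveRoot q a)
    (c : ℕ → k) (hc : ∀ i, c i = ∑ j ∈ range (i + 1), q ^ j) :
    let x := qx k a q
    let y := qy k a q
    let βx : ℤ → Qci k a q ⊗[k] (Qci k a q)ᵐᵒᵖ := fun s =>
      ∑ i ∈ range (a - 1), (c i * q ^ (s * (i : ℤ))) •
        ((x ^ (a - 2 - i) : Qci k a q) ⊗ₜ[k] (op (x ^ i) : (Qci k a q)ᵐᵒᵖ))
    let γy : ℤ → Qci k a q ⊗[k] (Qci k a q)ᵐᵒᵖ := fun s =>
      ∑ j ∈ range a, q ^ (s * (j : ℤ)) •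
        ((y ^ j : Qci k a q) ⊗ₜ[k] (op (y ^ (a - 1 - j)) : (Qci k a q)ᵐᵒᵖ))
    βx (-1) * γy 2 = γy 0 * βx 0 :=
  stmt_12_general k a ha q hq c
end
end
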